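/- arXiv:1505.02745 — 5 statements merged into one kernel-verified Lean document; each statement's English description precedes it below -/
import Mathlib

section
/- Let p, q, t be positive integers such that p ≠ q, gcd(p,q) = 1, Q_{p,q}(t) = 0, and the four inequalities t > p², t > p·q, t > q², and (p² + t)(p·q + t) > 2t² hold. Then there exists a perfect cuboid, i.e., positive integers x₁, x₂, x₃, d₁, d₂, d₃, L satisfying x₁² + x₂² + x₃² = L², x₂² + x₃² = d₁², x₃² + x₁² = d₂², and x₁² + x₂² = d₃². -/
/-- The cuboid characteristic polynomial `Q_{p,q}(t)`. -/
def cuboidQ {R : Type*} [CommRing R] (p q t : R) : R :=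
  t ^ 10 + (2 * q ^ 2 + p ^ 2) * (3 * q ^ 2 - 2 * p ^ 2) * t ^ 8
    + (q ^ 8 + 10 * p ^ 2 * q ^ 6 + 4 * p ^ 4 * q ^ 4 - 14 * p ^ 6 * q ^ 2 + p ^ 8) * t ^ 6
    - p ^ 2 * q ^ 2 * (q ^ 8 - 14 * p ^ 2 * q ^ 6 + 4 * p ^ 4 * q ^ 4 + 10 * p ^ 6 * q ^ 2 + p ^ 8) * t ^ 4
    - p ^ 6 * q ^ 6 * (q ^ 2 + 2 * p ^ 2) * (3 * p ^ 2 - 2 * q ^ 2) * t ^ 2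
    - p ^ 10 * q ^ 10

/-!
Euclid's formula applied to the parameter pairs `(t, p²)`, `(t, q²)` and `(t, pq)` gives three
right triangles with hypotenuses `A = t² + p⁴`, `B = t² + q⁴`, `C = t² + p²q²`. Scaling them to
the common hypotenuse `L = ABC` yields pairs `(xᵢ, dᵢ)` with `xᵢ² + dᵢ² = L²`, and then all four
cuboid equations reduce to the single one `x₁² + x₂² + x₃² = L²`. That one is
`(t² - p²q²) · Q_{p,q}(t) = 0`, so it holds at a root of `Q_{p,q}`. The inequalities
`t > p², pq, q²` make the odd legs `t² - p⁴`, `t² - q⁴`, `t² - p²q²` positive.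
-/

theorem euclid_sq_add_sq {R : Type*} [CommRing R] (m n : R) :
    (m ^ 2 - n ^ 2) ^ 2 + (2 * m * n) ^ 2 = (m ^ 2 + n ^ 2) ^ 2 := by
  ring

theorem sq_sub_sq_pos_of_lt {R : Type*} [CommRing R] [LinearOrder R] [IsStrictOrderedRing R]
    {a b : R} (ha : 0 ≤ a) (hab : a < b) : 0 < b ^ 2 - a ^ 2 :=
  sub_pos.mpr (pow_lt_pow_left₀ hab ha two_ne_zero)

theorem cuboid_eqs_of_sq_add_sq_eq {R : Type*} [CommRing R] {x₁ x₂ x₃ d₁ d₂ d₃ L : R}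
    (h₁ : x₁ ^ 2 + d₁ ^ 2 = L ^ 2) (h₂ : x₂ ^ 2 + d₂ ^ 2 = L ^ 2) (h₃ : x₃ ^ 2 + d₃ ^ 2 = L ^ 2)
    (hL : x₁ ^ 2 + x₂ ^ 2 + x₃ ^ 2 = L ^ 2) :
    x₂ ^ 2 + x₃ ^ 2 = d₁ ^ 2 ∧ x₃ ^ 2 + x₁ ^ 2 = d₂ ^ 2 ∧ x₁ ^ 2 + x₂ ^ 2 = d₃ ^ 2 :=
  ⟨by linear_combination hL - h₁, by linear_combination hL - h₂, by linear_combination hL - h₃⟩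

theorem euclid_edges_sum_sq_sub_sq_eq_mul_cuboidQ {R : Type*} [CommRing R] (p q t : R) :
    ((t ^ 2 - (p ^ 2) ^ 2) * (t ^ 2 + (q ^ 2) ^ 2) * (t ^ 2 + (p * q) ^ 2)) ^ 2
      + (2 * t * q ^ 2 * (t ^ 2 + (p ^ 2) ^ 2) * (t ^ 2 + (p * q) ^ 2)) ^ 2
      + ((t ^ 2 - (p * q) ^ 2) * (t ^ 2 + (p ^ 2) ^ 2) * (t ^ 2 + (q ^ 2) ^ 2)) ^ 2
      - ((t ^ 2 + (p ^ 2) ^ 2) * (t ^ 2 + (q ^ 2) ^ 2) * (t ^ 2 + (p * q) ^ 2)) ^ 2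
      = (t ^ 2 - (p * q) ^ 2) * cuboidQ p q t := by
  unfold cuboidQ
  ring

theorem stmt_0_general (p q t : ℤ) (hp : 0 < p) (hq : 0 < q) (ht : 0 < t)
    (hroot : cuboidQ p q t = 0)
    (h1 : t > p ^ 2) (h2 : t > p * q) (h3 : t > q ^ 2) :
    ∃ x₁ x₂ x₃ d₁ d₂ d₃ L : ℤ,
      0 < x₁ ∧ 0 < x₂ ∧ 0 < x₃ ∧ 0 < d₁ ∧ 0 < d₂ ∧ 0 < d₃ ∧ 0 < L ∧
      x₁ ^ 2 + x₂ ^ 2 + x₃ ^ 2 = L ^ 2 ∧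
      x₂ ^ 2 + x₃ ^ 2 = d₁ ^ 2 ∧
      x₃ ^ 2 + x₁ ^ 2 = d₂ ^ 2 ∧
      x₁ ^ 2 + x₂ ^ 2 = d₃ ^ 2 := by
  have hp' := sq_sub_sq_pos_of_lt (by positivity) h1
  have hq' := sq_sub_sq_pos_of_lt (by positivity) h3
  have hpq' := sq_sub_sq_pos_of_lt (by positivity) h2
  set A := t ^ 2 + (p ^ 2) ^ 2
  set B := t ^ 2 + (q ^ 2) ^ 2
  set C := t ^ 2 + (p * q) ^ 2
  have hL : ((t ^ 2 - (p ^ 2) ^ 2) * B * C) ^ 2 + (2 * t * q ^ 2 * A * C) ^ 2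
      + ((t ^ 2 - (p * q) ^ 2) * A * B) ^ 2 = (A * B * C) ^ 2 := by
    linear_combination euclid_edges_sum_sq_sub_sq_eq_mul_cuboidQ p q t + (t ^ 2 - (p * q) ^ 2) * hroot
  obtain ⟨e₁, e₂, e₃⟩ := cuboid_eqs_of_sq_add_sq_eq
    (d₁ := 2 * t * p ^ 2 * B * C) (d₂ := (t ^ 2 - (q ^ 2) ^ 2) * A * C)
    (d₃ := 2 * t * (p * q) * A * B)
    (by linear_combination (B * C) ^ 2 * euclid_sq_add_sq t (p ^ 2))
    (by linear_combination (A * C) ^ 2 * euclid_sq_add_sq t (q ^ 2))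
    (by linear_combination (A * B) ^ 2 * euclid_sq_add_sq t (p * q)) hL
  exact ⟨_, _, _, _, _, _, _, by positivity, by positivity, by positivity, by positivity,
    by positivity, by positivity, by positivity, hL, e₁, e₂, e₃⟩

/-- If positive integers `p ≠ q` are coprime, `t` is a positive integer root of the cuboid
characteristic equation `Q_{p,q}(t) = 0`, and the four cuboid inequalities hold, then a
perfect cuboid exists. -/
theorem stmt_0 (p q t : ℤ) (hp : 0 < p) (hq : 0 < q) (ht : 0 < t)
    (hne : p ≠ q) (hcop : Int.gcd p q = 1)
    (hroot : cuboidQ p q t = 0)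
    (h1 : t > p ^ 2) (h2 : t > p * q) (h3 : t > q ^ 2)
    (h4 : (p ^ 2 + t) * (p * q + t) > 2 * t ^ 2) :
    ∃ x₁ x₂ x₃ d₁ d₂ d₃ L : ℤ,
      0 < x₁ ∧ 0 < x₂ ∧ 0 < x₃ ∧ 0 < d₁ ∧ 0 < d₂ ∧ 0 < d₃ ∧ 0 < L ∧
      x₁ ^ 2 + x₂ ^ 2 + x₃ ^ 2 = L ^ 2 ∧
      x₂ ^ 2 + x₃ ^ 2 = d₁ ^ 2 ∧
      x₃ ^ 2 + x₁ ^ 2 = d₂ ^ 2 ∧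
      x₁ ^ 2 + x₂ ^ 2 = d₃ ^ 2 :=
  stmt_0_general p q t hp hq ht hroot h1 h2 h3
end

section
/- Let p̃, q̃ be integers with p̃ > 0 and q̃ ≥ 97·p̃. Then there exists a real number t with Q_{p̃+q̃, q̃}(t) = 0 satisfying q̃² + 5·p̃·q̃ + 10·p̃² − 74·p̃³/q̃ < t < q̃² + 5·p̃·q̃ + 10·p̃². -/
section CommRing

variable {R : Type*} [CommRing R]

theorem cuboidQ_bisectorial_upper (p q : R) :
    cuboidQ (p + q) q (q ^ 2 + 5 * p * q + 10 * p ^ 2) =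
      1216 * p ^ 3 * q ^ 17 + 35616 * p ^ 4 * q ^ 16 + 523200 * p ^ 5 * q ^ 15
      + 5111520 * p ^ 6 * q ^ 14 + 37038816 * p ^ 7 * q ^ 13 + 210366432 * p ^ 8 * q ^ 12
      + 966180200 * p ^ 9 * q ^ 11 + 3653712972 * p ^ 10 * q ^ 10 + 11485697220 * p ^ 11 * q ^ 9
      + 30111878140 * p ^ 12 * q ^ 8 + 65690788800 * p ^ 13 * q ^ 7
      + 118321173300 * p ^ 14 * q ^ 6 + 173444836500 * p ^ 15 * q ^ 5
      + 202173718500 * p ^ 16 * q ^ 4 + 180652680000 * p ^ 17 * q ^ 3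
      + 116482340000 * p ^ 18 * q ^ 2 + 48411000000 * p ^ 19 * q + 9801000000 * p ^ 20 := by
  unfold cuboidQ; ring

theorem continuous_cuboidQ [TopologicalSpace R] [IsTopologicalRing R] (p q : R) :
    Continuous (cuboidQ p q) := by
  unfold cuboidQ; fun_prop

theorem cuboidQ_bisectorial_upper_pos [LinearOrder R] [IsStrictOrderedRing R] {p q : R}
    (hp : 0 < p) (hq : 0 ≤ q) : 0 < cuboidQ (p + q) q (q ^ 2 + 5 * p * q + 10 * p ^ 2) := by
  rw [cuboidQ_bisectorial_upper]; positivity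

end CommRing

section Field

variable {K : Type*} [Field K]

theorem cuboidQ_bisectorial_lower (p q : K) (hq : q ≠ 0) :
    q ^ 10 * cuboidQ (p + q) q (q ^ 2 + 5 * p * q + 10 * p ^ 2 - 74 * p ^ 3 / q) =
      -(1152 * p ^ 3 * (q - 97 * p) ^ 27 + 3040672 * p ^ 4 * (q - 97 * p) ^ 26
        + 3864351360 * p ^ 5 * (q - 97 * p) ^ 25 + 3148251260992 * p ^ 6 * (q - 97 * p) ^ 24
        + 1846736798172096 * p ^ 7 * (q - 97 * p) ^ 23
        + 830534235685125504 * p ^ 8 * (q - 97 * p) ^ 22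
        + 297737822655683382872 * p ^ 9 * (q - 97 * p) ^ 21
        + 87331441784352264035820 * p ^ 10 * (q - 97 * p) ^ 20
        + 21346974441515794443267344 * p ^ 11 * (q - 97 * p) ^ 19
        + 4406395056649624635423511152 * p ^ 12 * (q - 97 * p) ^ 18
        + 775536529072284456744318340088 * p ^ 13 * (q - 97 * p) ^ 17
        + 117196629811014711597480675876548 * p ^ 14 * (q - 97 * p) ^ 16
        + 15279909666657963606864071875889552 * p ^ 15 * (q - 97 * p) ^ 15
        + 1724034340743494409408902794198155704 * p ^ 16 * (q - 97 * p) ^ 14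
        + 168590622624065549287342541849170234504 * p ^ 17 * (q - 97 * p) ^ 13
        + 14288389657649182531070125335222689184020 * p ^ 18 * (q - 97 * p) ^ 12
        + 1047979029664747690353867592395172496338928 * p ^ 19 * (q - 97 * p) ^ 11
        + 66315440150581297239124855494436052448219296 * p ^ 20 * (q - 97 * p) ^ 10
        + 3603053395867606160946246651004227953953065576 * p ^ 21 * (q - 97 * p) ^ 9
        + 166916161748609853878365807720569764127192228636 * p ^ 22 * (q - 97 * p) ^ 8
        + 6529912898435526350324324255241733028980707269424 * p ^ 23 * (q - 97 * p) ^ 7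
        + 212885143184663988914074035485641311348586319350424 * p ^ 24 * (q - 97 * p) ^ 6
        + 5678627018130312484053059362373433828281482360392000 * p ^ 25 * (q - 97 * p) ^ 5
        + 120743878249772439725152610306453385997519460975226848 * p ^ 26 * (q - 97 * p) ^ 4
        + 1968356020940855452920179165445025743588507381479857920 * p ^ 27 * (q - 97 * p) ^ 3
        + 23103875785246409749137006374782109053470350571845123200 * p ^ 28 * (q - 97 * p) ^ 2
        + 173840745335778172359941205962843152697089492939511168000 * p ^ 29 * (q - 97 * p)
        + 629807788577099129318988093737829364453058769595942080000 * p ^ 30) := by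
  unfold cuboidQ
  field_simp
  ring

theorem cuboidQ_bisectorial_lower_neg [LinearOrder K] [IsStrictOrderedRing K] {p q : K}
    (hp : 0 < p) (hq : 97 * p ≤ q) :
    cuboidQ (p + q) q (q ^ 2 + 5 * p * q + 10 * p ^ 2 - 74 * p ^ 3 / q) < 0 := by
  have hq0 : 0 < q := by linarith
  have hr : 0 ≤ q - 97 * p := by linarith
  have hmul := cuboidQ_bisectorial_lower p q hq0.ne'
  generalize q - 97 * p = r at hr hmul
  have hneg : q ^ 10 * cuboidQ (p + q) q (q ^ 2 + 5 * p * q + 10 * p ^ 2 - 74 * p ^ 3 / q) < 0 := by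
    rw [hmul, neg_neg_iff_pos]; positivity
  exact neg_of_mul_neg_right hneg (by positivity)

end Field

theorem exists_root_cuboidQ_bisectorial {p q : ℝ} (hp : 0 < p) (hq : 97 * p ≤ q) :
    ∃ t : ℝ, cuboidQ (p + q) q t = 0 ∧
      q ^ 2 + 5 * p * q + 10 * p ^ 2 - 74 * p ^ 3 / q < t ∧
      t < q ^ 2 + 5 * p * q + 10 * p ^ 2 := by
  have hq0 : 0 < q := by linarith
  have hab : q ^ 2 + 5 * p * q + 10 * p ^ 2 - 74 * p ^ 3 / q < q ^ 2 + 5 * p * q + 10 * p ^ 2 :=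
    sub_lt_self _ (by positivity)
  obtain ⟨t, ht, hroot⟩ := intermediate_value_Ioo hab.le (continuous_cuboidQ _ _).continuousOn
    ⟨cuboidQ_bisectorial_lower_neg hp hq, cuboidQ_bisectorial_upper_pos hp hq0.le⟩
  exact ⟨t, hroot, ht⟩

/-- For integers `p̃ > 0` and `q̃ ≥ 97 p̃` there is a real root of `Q_{p̃+q̃, q̃}` in the
asymptotic interval `(q̃² + 5p̃q̃ + 10p̃² − 74p̃³/q̃, q̃² + 5p̃q̃ + 10p̃²)`. -/
theorem stmt_5 (p' q' : ℤ) (hp : 0 < p') (hq : 97 * p' ≤ q') :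
    ∃ t : ℝ, cuboidQ ((p' : ℝ) + (q' : ℝ)) (q' : ℝ) t = 0 ∧
      (q' : ℝ) ^ 2 + 5 * (p' : ℝ) * (q' : ℝ) + 10 * (p' : ℝ) ^ 2
          - 74 * (p' : ℝ) ^ 3 / (q' : ℝ) < t ∧
      t < (q' : ℝ) ^ 2 + 5 * (p' : ℝ) * (q' : ℝ) + 10 * (p' : ℝ) ^ 2 :=
  exists_root_cuboidQ_bisectorial (by exact_mod_cast hp) (by exact_mod_cast hq)
end

section
/- Let p̃, q̃ be integers with p̃ ≠ 0 and q̃ ≥ 97·|p̃|. Then the degree-ten polynomial t ↦ Q_{p̃+q̃, q̃}(t), regarded as a polynomial over ℂ, has ten pairwise distinct complex roots; i.e., all of its roots are simple. -/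
open Polynomial

namespace Polynomial

theorem nodup_roots_of_forall_isRoot_not_isRoot_derivative {R : Type*} [CommRing R] [IsDomain R]
    {f : R[X]} (hf : f ≠ 0) (h : ∀ x, f.IsRoot x → ¬ (derivative f).IsRoot x) :
    f.roots.Nodup := by
  classical
  refine Multiset.nodup_iff_count_le_one.2 fun x => ?_
  rw [count_roots]
  by_contra! hx
  obtain ⟨hroot, hroot'⟩ := (one_lt_rootMultiplicity_iff_isRoot hf).1 hx
  exact h x hroot hroot'

theorem exists_injective_fin_of_nodup_roots {K : Type*} [Field K] [IsAlgClosed K] {f : K[X]}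
    {n : ℕ} (hf : f ≠ 0) (hnodup : f.roots.Nodup) (hn : f.natDegree = n) :
    ∃ r : Fin n → K, Function.Injective r ∧ (∀ i, f.IsRoot (r i)) ∧
      ∀ t, f.IsRoot t → ∃ i, t = r i := by
  classical
  have hcard : f.roots.toFinset.card = n := by
    rw [Multiset.toFinset_card_of_nodup hnodup, IsAlgClosed.card_roots_eq_natDegree, hn]
  let e : Fin n ≃ f.roots.toFinset := (f.roots.toFinset.equivFinOfCardEq hcard).symm
  refine ⟨fun i => (e i : K), Subtype.val_injective.comp e.injective, fun i => ?_, fun t ht => ?_⟩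
  · exact (mem_roots hf).1 (Multiset.mem_toFinset.1 (e i).2)
  · refine ⟨e.symm ⟨t, Multiset.mem_toFinset.2 ((mem_roots hf).2 ht)⟩, ?_⟩
    simp

end Polynomial

section
variable {R : Type*} [CommRing R]

noncomputable def cuboidPoly (p q : R) : R[X] :=
  cuboidQ (C p) (C q) X

def cuboidSextic (p q : R) : R :=
  p ^ 12 + 15 * p ^ 10 * q ^ 2 - 1585 * p ^ 8 * q ^ 4 + 3052 * p ^ 6 * q ^ 6
    - 1585 * p ^ 4 * q ^ 8 + 15 * p ^ 2 * q ^ 10 + q ^ 12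

/-- The discriminant of the quintic `F` with `cuboidQ p q t = F (t ^ 2)`. -/
def cuboidDisc (p q : R) : R :=
  2048 * p ^ 18 * q ^ 18 * (p ^ 2 - q ^ 2) ^ 12 * (p ^ 2 + q ^ 2) ^ 4 * cuboidSextic p q

@[simp]
theorem eval_cuboidPoly (p q t : R) : (cuboidPoly p q).eval t = cuboidQ p q t := by
  simp [cuboidPoly, cuboidQ]

theorem natDegree_cuboidPoly [Nontrivial R] (p q : R) : (cuboidPoly p q).natDegree = 10 := by
  unfold cuboidPoly cuboidQ
  compute_degree!

theorem two_mul_mul_cuboidDisc_eq_zero_of_isRoot {p q z : R} (h : cuboidQ p q z = 0)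
    (h' : (derivative (cuboidPoly p q)).eval z = 0) : 2 * z * cuboidDisc p q = 0 := by
  simp only [cuboidPoly, cuboidQ, derivative_add, derivative_sub, derivative_mul, derivative_C,
    derivative_pow, derivative_X, derivative_ofNat, eval_add, eval_sub, eval_mul,
    eval_pow, eval_C, eval_X, eval_ofNat, eval_zero, eval_one] at h'
  simp only [cuboidQ] at h
  -- `disc F = A(s) F(s) + B(s) F'(s)` at `s = z²`, and `Q'(z) = 2z F'(z²)`
  unfold cuboidDisc cuboidSextic
  linear_combination (2 * z * ((128 * p ^ 6 * q ^ 54 - 960 * p ^ 8 * q ^ 52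
    - 227072 * p ^ 10 * q ^ 50 + 5229120 * p ^ 12 * q ^ 48 - 38192896 * p ^ 14 * q ^ 46
    + 131380160 * p ^ 16 * q ^ 44 - 210937088 * p ^ 18 * q ^ 42 + 15826368 * p ^ 20 * q ^ 40
    + 534766336 * p ^ 22 * q ^ 38 - 841383232 * p ^ 24 * q ^ 36 + 211667072 * p ^ 26 * q ^ 34
    + 858052672 * p ^ 28 * q ^ 32 - 1067477248 * p ^ 30 * q ^ 30 + 213970624 * p ^ 32 * q ^ 28
    + 558254976 * p ^ 34 * q ^ 26 - 518767040 * p ^ 36 * q ^ 24 + 99177088 * p ^ 38 * q ^ 22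
    + 113495552 * p ^ 40 * q ^ 20 - 85993856 * p ^ 42 * q ^ 18 + 22585472 * p ^ 44 * q ^ 16
    - 1041920 * p ^ 46 * q ^ 14 - 388992 * p ^ 48 * q ^ 12 + 4480 * p ^ 50 * q ^ 10
    + 256 * p ^ 52 * q ^ 8) + (-192 * p ^ 4 * q ^ 52 - 3456 * p ^ 6 * q ^ 50
    + 292416 * p ^ 8 * q ^ 48 - 179456 * p ^ 10 * q ^ 46 - 16667712 * p ^ 12 * q ^ 44
    + 82470144 * p ^ 14 * q ^ 42 - 121329216 * p ^ 16 * q ^ 40 - 126347776 * p ^ 18 * q ^ 38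
    + 628022976 * p ^ 20 * q ^ 36 - 619564800 * p ^ 22 * q ^ 34 - 380723520 * p ^ 24 * q ^ 32
    + 1340128640 * p ^ 26 * q ^ 30 - 947919680 * p ^ 28 * q ^ 28 - 340364800 * p ^ 30 * q ^ 26
    + 1020713152 * p ^ 32 * q ^ 24 - 656078464 * p ^ 34 * q ^ 22 + 16356096 * p ^ 36 * q ^ 20
    + 253365376 * p ^ 38 * q ^ 18 - 187672576 * p ^ 40 * q ^ 16 + 66032000 * p ^ 42 * q ^ 14
    - 11075968 * p ^ 44 * q ^ 12 + 542976 * p ^ 46 * q ^ 10 + 4224 * p ^ 48 * q ^ 8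
    - 384 * p ^ 50 * q ^ 6) * z ^ 2 + (-1536 * p ^ 4 * q ^ 48 - 12032 * p ^ 6 * q ^ 46
    + 2482880 * p ^ 8 * q ^ 44 - 26338560 * p ^ 10 * q ^ 42 + 105639616 * p ^ 12 * q ^ 40
    - 183051264 * p ^ 14 * q ^ 38 + 33281856 * p ^ 16 * q ^ 36 + 395189376 * p ^ 18 * q ^ 34
    - 608838720 * p ^ 20 * q ^ 32 + 161450752 * p ^ 22 * q ^ 30 + 500842432 * p ^ 24 * q ^ 28
    - 604360832 * p ^ 26 * q ^ 26 + 171885120 * p ^ 28 * q ^ 24 + 193113600 * p ^ 30 * q ^ 22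
    - 219451456 * p ^ 32 * q ^ 20 + 86464384 * p ^ 34 * q ^ 18 + 5057344 * p ^ 36 * q ^ 16
    - 21039616 * p ^ 38 * q ^ 14 + 9098880 * p ^ 40 * q ^ 12 - 1416832 * p ^ 42 * q ^ 10
    + 3584 * p ^ 44 * q ^ 8 + 1024 * p ^ 46 * q ^ 6) * z ^ 4 + (-320 * p ^ 4 * q ^ 44
    - 2560 * p ^ 6 * q ^ 42 + 516800 * p ^ 8 * q ^ 40 - 5400320 * p ^ 10 * q ^ 38
    + 21204800 * p ^ 12 * q ^ 36 - 36165120 * p ^ 14 * q ^ 34 + 8225600 * p ^ 16 * q ^ 32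
    + 69700480 * p ^ 18 * q ^ 30 - 110406720 * p ^ 20 * q ^ 28 + 40788480 * p ^ 22 * q ^ 26
    + 68242880 * p ^ 24 * q ^ 24 - 98742400 * p ^ 26 * q ^ 22 + 46541760 * p ^ 28 * q ^ 20
    + 10447360 * p ^ 30 * q ^ 18 - 28159040 * p ^ 32 * q ^ 16 + 18488960 * p ^ 34 * q ^ 14
    - 6163840 * p ^ 36 * q ^ 12 + 885760 * p ^ 38 * q ^ 10 - 1920 * p ^ 40 * q ^ 8
    - 640 * p ^ 42 * q ^ 6) * z ^ 6)) * h + ((64 * p ^ 10 * q ^ 54 + 512 * p ^ 12 * q ^ 52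
    - 106432 * p ^ 14 * q ^ 50 + 947968 * p ^ 16 * q ^ 48 - 3436096 * p ^ 18 * q ^ 46
    + 4268544 * p ^ 20 * q ^ 44 + 8617408 * p ^ 22 * q ^ 42 - 37488128 * p ^ 24 * q ^ 40
    + 42577344 * p ^ 26 * q ^ 38 + 20349056 * p ^ 28 * q ^ 36 - 101194432 * p ^ 30 * q ^ 34
    + 87479040 * p ^ 32 * q ^ 32 + 20935104 * p ^ 34 * q ^ 30 - 94236800 * p ^ 36 * q ^ 28
    + 64465728 * p ^ 38 * q ^ 26 + 466944 * p ^ 40 * q ^ 24 - 26649856 * p ^ 42 * q ^ 22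
    + 17575296 * p ^ 44 * q ^ 20 - 5205632 * p ^ 46 * q ^ 18 + 637952 * p ^ 48 * q ^ 16
    - 3200 * p ^ 50 * q ^ 14 - 384 * p ^ 52 * q ^ 12) + (-64 * p ^ 6 * q ^ 54 + 448 * p ^ 8 * q ^ 52
    + 112448 * p ^ 10 * q ^ 50 - 2586432 * p ^ 12 * q ^ 48 + 19309760 * p ^ 14 * q ^ 46
    - 67242432 * p ^ 16 * q ^ 44 + 107940544 * p ^ 18 * q ^ 42 - 7050176 * p ^ 20 * q ^ 40
    - 270187840 * p ^ 22 * q ^ 38 + 414190400 * p ^ 24 * q ^ 36 - 96153280 * p ^ 26 * q ^ 34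
    - 413867200 * p ^ 28 * q ^ 32 + 499508928 * p ^ 30 * q ^ 30 - 100397248 * p ^ 32 * q ^ 28
    - 248011712 * p ^ 34 * q ^ 26 + 232551744 * p ^ 36 * q ^ 24 - 50135936 * p ^ 38 * q ^ 22
    - 45522432 * p ^ 40 * q ^ 20 + 37089408 * p ^ 42 * q ^ 18 - 10263808 * p ^ 44 * q ^ 16
    + 529792 * p ^ 46 * q ^ 14 + 187264 * p ^ 48 * q ^ 12 - 2048 * p ^ 50 * q ^ 10
    - 128 * p ^ 52 * q ^ 8) * z ^ 2 + (64 * p ^ 4 * q ^ 52 + 1152 * p ^ 6 * q ^ 50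
    - 97600 * p ^ 8 * q ^ 48 + 56768 * p ^ 10 * q ^ 46 + 5701696 * p ^ 12 * q ^ 44
    - 27971136 * p ^ 14 * q ^ 42 + 39937600 * p ^ 16 * q ^ 40 + 46485824 * p ^ 18 * q ^ 38
    - 214697024 * p ^ 20 * q ^ 36 + 201799104 * p ^ 22 * q ^ 34 + 142526784 * p ^ 24 * q ^ 32
    - 454195392 * p ^ 26 * q ^ 30 + 304568256 * p ^ 28 * q ^ 28 + 127743296 * p ^ 30 * q ^ 26
    - 341658048 * p ^ 32 * q ^ 24 + 212607808 * p ^ 34 * q ^ 22 - 2072832 * p ^ 36 * q ^ 20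
    - 84421952 * p ^ 38 * q ^ 18 + 62094592 * p ^ 40 * q ^ 16 - 21924352 * p ^ 42 * q ^ 14
    + 3697920 * p ^ 44 * q ^ 12 - 181248 * p ^ 46 * q ^ 10 - 1408 * p ^ 48 * q ^ 8
    + 128 * p ^ 50 * q ^ 6) * z ^ 4 + (384 * p ^ 4 * q ^ 48 + 3008 * p ^ 6 * q ^ 46
    - 620736 * p ^ 8 * q ^ 44 + 6584256 * p ^ 10 * q ^ 42 - 26391744 * p ^ 12 * q ^ 40
    + 45706048 * p ^ 14 * q ^ 38 - 8380736 * p ^ 16 * q ^ 36 - 98330176 * p ^ 18 * q ^ 34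
    + 151711424 * p ^ 20 * q ^ 32 - 40919616 * p ^ 22 * q ^ 30 - 123747776 * p ^ 24 * q ^ 28
    + 150563136 * p ^ 26 * q ^ 26 - 44037312 * p ^ 28 * q ^ 24 - 47167808 * p ^ 30 * q ^ 22
    + 54789696 * p ^ 32 * q ^ 20 - 22020800 * p ^ 34 * q ^ 18 - 1045312 * p ^ 36 * q ^ 16
    + 5227904 * p ^ 38 * q ^ 14 - 2276992 * p ^ 40 * q ^ 12 + 354304 * p ^ 42 * q ^ 10
    - 896 * p ^ 44 * q ^ 8 - 256 * p ^ 46 * q ^ 6) * z ^ 6 + (64 * p ^ 4 * q ^ 44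
    + 512 * p ^ 6 * q ^ 42 - 103360 * p ^ 8 * q ^ 40 + 1080064 * p ^ 10 * q ^ 38
    - 4240960 * p ^ 12 * q ^ 36 + 7233024 * p ^ 14 * q ^ 34 - 1645120 * p ^ 16 * q ^ 32
    - 13940096 * p ^ 18 * q ^ 30 + 22081344 * p ^ 20 * q ^ 28 - 8157696 * p ^ 22 * q ^ 26
    - 13648576 * p ^ 24 * q ^ 24 + 19748480 * p ^ 26 * q ^ 22 - 9308352 * p ^ 28 * q ^ 20
    - 2089472 * p ^ 30 * q ^ 18 + 5631808 * p ^ 32 * q ^ 16 - 3697792 * p ^ 34 * q ^ 14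
    + 1232768 * p ^ 36 * q ^ 12 - 177152 * p ^ 38 * q ^ 10 + 384 * p ^ 40 * q ^ 8
    + 128 * p ^ 42 * q ^ 6) * z ^ 8) * h'

theorem cuboidPoly_ne_zero [Nontrivial R] (p q : R) : cuboidPoly p q ≠ 0 :=
  ne_zero_of_natDegree_gt (n := 0) (by rw [natDegree_cuboidPoly]; norm_num)

theorem nodup_roots_cuboidPoly [IsDomain R] [NeZero (2 : R)] {p q : R} (hD : cuboidDisc p q ≠ 0) :
    (cuboidPoly p q).roots.Nodup := by
  refine nodup_roots_of_forall_isRoot_not_isRoot_derivative (cuboidPoly_ne_zero p q)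
    fun z h h' => ?_
  rw [IsRoot, eval_cuboidPoly] at h
  have hz : z = 0 := by
    simpa [hD, two_ne_zero] using two_mul_mul_cuboidDisc_eq_zero_of_isRoot h h'
  subst hz
  apply hD
  unfold cuboidQ at h
  unfold cuboidDisc
  linear_combination (-(2048 * p ^ 8 * q ^ 8 * (p ^ 2 - q ^ 2) ^ 12 * (p ^ 2 + q ^ 2) ^ 4 *
    cuboidSextic p q)) * h

end

theorem cuboidSextic_neg {R : Type*} [CommRing R] [LinearOrder R] [IsStrictOrderedRing R]
    {a b : R} (hb : b ≠ 0) (hlo : 47 * b ^ 2 ≤ 48 * a ^ 2) (hhi : 48 * a ^ 2 ≤ 49 * b ^ 2) :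
    cuboidSextic a b < 0 := by
  obtain ⟨u, hu, hu_def⟩ : ∃ u, 0 ≤ u ∧ u = 49 * b ^ 2 - 48 * a ^ 2 := ⟨_, by linarith, rfl⟩
  obtain ⟨v, hv, hv_def⟩ : ∃ v, 0 ≤ v ∧ v = 48 * a ^ 2 - 47 * b ^ 2 := ⟨_, by linarith, rfl⟩
  -- coefficients of `K` in the Bernstein basis `uᵏ v⁶⁻ᵏ` of the interval `47/48 ≤ a²/b² ≤ 49/48`
  have key : 782757789696 * cuboidSextic a b + 995167105775 * (u + v) ^ 6
      = -(132168497184 * v ^ 6 + 621767114796 * u * v ^ 5 + 1168197173568 * u ^ 2 * v ^ 4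
        + 1095618740584 * u ^ 3 * v ^ 3 + 512871901344 * u ^ 4 * v ^ 2
        + 95851716780 * u ^ 5 * v) := by
    rw [hu_def, hv_def, cuboidSextic]; ring
  have huv : u + v = 2 * b ^ 2 := by rw [hu_def, hv_def]; ring
  have hpos : 0 < (u + v) ^ 6 := by rw [huv]; positivity
  have hrest : 0 ≤ 132168497184 * v ^ 6 + 621767114796 * u * v ^ 5 + 1168197173568 * u ^ 2 * v ^ 4
        + 1095618740584 * u ^ 3 * v ^ 3 + 512871901344 * u ^ 4 * v ^ 2
        + 95851716780 * u ^ 5 * v := by positivity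
  linarith

theorem cuboidDisc_bisectorial_ne_zero {p q : ℤ} (hp : p ≠ 0) (hq : 97 * |p| ≤ q) :
    cuboidDisc (p + q) q ≠ 0 := by
  have hq0 : 0 < q := by linarith [Int.one_le_abs hp]
  have hpq : 0 < p + q := by linarith [neg_abs_le p]
  have hp2q : 0 < p + 2 * q := by linarith [neg_abs_le p]
  have hdiff : (p + q) ^ 2 - q ^ 2 = p * (p + 2 * q) := by ring
  have hsmall : 48 * |p * (p + 2 * q)| ≤ q ^ 2 := by
    rw [abs_mul, abs_of_pos hp2q]
    nlinarith [mul_le_mul_of_nonneg_right hq hp2q.le, le_abs_self p]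
  have hsextic := cuboidSextic_neg hq0.ne' (a := p + q)
    (by nlinarith [neg_abs_le (p * (p + 2 * q))]) (by nlinarith [le_abs_self (p * (p + 2 * q))])
  have hsq : (p + q) ^ 2 + q ^ 2 ≠ 0 := by positivity
  simp [cuboidDisc, hdiff, hp, hp2q.ne', hpq.ne', hq0.ne', hsq, hsextic.ne]

/-- For integers `p̃ ≠ 0` and `q̃ ≥ 97|p̃|`, the degree-ten polynomial
`t ↦ Q_{p̃+q̃, q̃}(t)` over `ℂ` has ten pairwise distinct roots, i.e. all of its roots
are simple. -/
theorem stmt_12 (p' q' : ℤ) (hp : p' ≠ 0) (hq : 97 * |p'| ≤ q') :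
    ∃ r : Fin 10 → ℂ, Function.Injective r ∧
      (∀ i, cuboidQ ((p' : ℂ) + (q' : ℂ)) (q' : ℂ) (r i) = 0) ∧
      (∀ t : ℂ, cuboidQ ((p' : ℂ) + (q' : ℂ)) (q' : ℂ) t = 0 → ∃ i, t = r i) := by
  have hD : cuboidDisc ((p' : ℂ) + (q' : ℂ)) (q' : ℂ) ≠ 0 := by
    have h := (Int.cast_ne_zero (α := ℂ)).2 (cuboidDisc_bisectorial_ne_zero hp hq)
    push_cast [cuboidDisc, cuboidSextic] at h
    exact h
  obtain ⟨r, hr, hroot, hall⟩ := exists_injective_fin_of_nodup_roots (cuboidPoly_ne_zero _ _)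
    (nodup_roots_cuboidPoly hD) (natDegree_cuboidPoly _ _)
  simp only [IsRoot, eval_cuboidPoly] at hroot hall
  exact ⟨r, hr, hroot, hall⟩
end

section
/- The quartic equation u⁴ + 8u² − 12·i·u − 4 = 0 over ℂ has a purely imaginary root u = i·y₁ with 0.486 < y₁ < 0.487, and another purely imaginary root u = i·y₂ with −3.440 < y₂ < −3.439. -/
/-! On the imaginary axis `u = i y` the quartic becomes the real polynomial
`y⁴ − 8y² + 12y − 4`, since `u⁴ = y⁴`, `8u² = −8y²` and `−12iu = 12y`.
This polynomial changes sign on `[0.486, 0.487]` and on `[−3.440, −3.439]`,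
so the intermediate value theorem gives a real root in each interval. -/

open Complex Set

lemma exists_mem_Ioo_eq_zero_of_mul_neg {f : ℝ → ℝ} {a b : ℝ} (hab : a ≤ b)
    (hf : ContinuousOn f (Icc a b)) (hsign : f a * f b < 0) :
    ∃ y ∈ Ioo a b, f y = 0 := by
  rcases mul_neg_iff.1 hsign with ⟨ha, hb⟩ | ⟨ha, hb⟩
  · exact intermediate_value_Ioo' hab hf ⟨hb, ha⟩
  · exact intermediate_value_Ioo hab hf ⟨ha, hb⟩

def imagAxisQuartic (y : ℝ) : ℝ := y ^ 4 - 8 * y ^ 2 + 12 * y - 4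

lemma continuous_imagAxisQuartic : Continuous imagAxisQuartic := by
  unfold imagAxisQuartic
  fun_prop

lemma quartic_I_mul_ofReal (y : ℝ) :
    (I * (y : ℂ)) ^ 4 + 8 * (I * (y : ℂ)) ^ 2 - 12 * I * (I * (y : ℂ)) - 4
      = (imagAxisQuartic y : ℂ) := by
  simp only [imagAxisQuartic, ofReal_sub, ofReal_add, ofReal_mul, ofReal_pow, ofReal_ofNat]
  linear_combination (y : ℂ) ^ 4 * I_pow_four + (8 * (y : ℂ) ^ 2 - 12 * y) * I_sq

lemma exists_quartic_root_I_mul_Ioo {a b : ℝ} (hab : a ≤ b)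
    (hsign : imagAxisQuartic a * imagAxisQuartic b < 0) :
    ∃ y ∈ Ioo a b,
      (I * (y : ℂ)) ^ 4 + 8 * (I * (y : ℂ)) ^ 2 - 12 * I * (I * (y : ℂ)) - 4 = 0 := by
  obtain ⟨y, hy, hy0⟩ :=
    exists_mem_Ioo_eq_zero_of_mul_neg hab continuous_imagAxisQuartic.continuousOn hsign
  exact ⟨y, hy, by rw [quartic_I_mul_ofReal, hy0, ofReal_zero]⟩

/-- The quartic `u⁴ + 8u² − 12iu − 4 = 0` has a purely imaginary root `i y₁` with
`0.486 < y₁ < 0.487` and another purely imaginary root `i y₂` with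
`−3.440 < y₂ < −3.439`. -/
theorem stmt_17 :
    (∃ y₁ : ℝ, (0.486 : ℝ) < y₁ ∧ y₁ < 0.487 ∧
      (Complex.I * (y₁ : ℂ)) ^ 4 + 8 * (Complex.I * (y₁ : ℂ)) ^ 2
        - 12 * Complex.I * (Complex.I * (y₁ : ℂ)) - 4 = 0) ∧
    (∃ y₂ : ℝ, (-3.440 : ℝ) < y₂ ∧ y₂ < -3.439 ∧
      (Complex.I * (y₂ : ℂ)) ^ 4 + 8 * (Complex.I * (y₂ : ℂ)) ^ 2
        - 12 * Complex.I * (Complex.I * (y₂ : ℂ)) - 4 = 0) := by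
  constructor
  · obtain ⟨y, ⟨hlo, hhi⟩, hroot⟩ :=
      exists_quartic_root_I_mul_Ioo (a := 0.486) (b := 0.487) (by norm_num)
        (by norm_num [imagAxisQuartic])
    exact ⟨y, hlo, hhi, hroot⟩
  · obtain ⟨y, ⟨hlo, hhi⟩, hroot⟩ :=
      exists_quartic_root_I_mul_Ioo (a := -3.440) (b := -3.439) (by norm_num)
        (by norm_num [imagAxisQuartic])
    exact ⟨y, hlo, hhi, hroot⟩
end

section
/- The polynomial X⁴ + 8·X² − 12·i·X − 4 with coefficients in the ring ℤ[i] of Gaussian integers (where the coefficient of X is −12·i) is irreducible in ℤ[i][X]. In particular, the quartic u⁴ + 8u² − 12·i·u − 4 = 0 has no root of the form a + b·i with a, b rational. -/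
/-!
Under `ℤ[i] → 𝔽₅`, `i ↦ 3`, the quartic becomes `X⁴ + 3X² − X − 4`, which has no root and no
factorisation into monic quadratics over `𝔽₅`; being monic, the quartic is therefore irreducible
over `ℤ[i]`. By Gauss's lemma (`ℤ[i]` is integrally closed) it stays irreducible over `ℚ(i)`, so it
has no root in `ℚ(i)`, which is the subfield of `ℂ` generated by `ℤ[i]`.
-/

open Polynomial

namespace Polynomial

variable {R : Type*} [CommRing R]

theorem Monic.eq_X_sq_add_C_mul_X_add_C {p : R[X]} (hm : p.Monic) (hnd : p.natDegree = 2) :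
    p = X ^ 2 + C (p.coeff 1) * X + C (p.coeff 0) := by
  conv_lhs => rw [hm.as_sum, hnd]
  simp only [Finset.sum_range_succ, Finset.sum_range_zero, pow_zero, pow_one, mul_one]
  ring

theorem Monic.irreducible_of_natDegree_eq_four [IsDomain R] {f : R[X]} (hm : f.Monic)
    (hd : f.natDegree = 4) (hroot : ∀ x, ¬ f.IsRoot x)
    (hquad : ∀ a b c d : R, f ≠ (X ^ 2 + C a * X + C b) * (X ^ 2 + C c * X + C d)) :
    Irreducible f := by
  rw [hm.irreducible_iff_natDegree', hd]
  refine ⟨by rintro rfl; simp at hd, fun g h hg hh hgh hdeg => ?_⟩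
  have hdeg_sum : g.natDegree + h.natDegree = 4 := by rw [← hg.natDegree_mul hh, hgh, hd]
  obtain hh1 | hh2 : h.natDegree = 1 ∨ h.natDegree = 2 := by simp at hdeg; omega
  · refine hroot (-h.coeff 0) ?_
    rw [← hgh, IsRoot, eval_mul, hh.eq_X_add_C hh1]
    simp
  · refine hquad (g.coeff 1) (g.coeff 0) (h.coeff 1) (h.coeff 0) ?_
    rw [← hgh, ← hg.eq_X_sq_add_C_mul_X_add_C (by omega), ← hh.eq_X_sq_add_C_mul_X_add_C hh2]

theorem Monic.eval₂_ne_zero_of_mem_closure_range [IsDomain R] [IsIntegrallyClosed R]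
    {L : Type*} [Field L] {f : R[X]} (hm : f.Monic) (hirr : Irreducible f)
    (hdeg : f.natDegree ≠ 1) {g : R →+* L} (hg : Function.Injective g) {z : L}
    (hz : z ∈ Subfield.closure g.range) : f.eval₂ g z ≠ 0 := by
  let K := FractionRing R
  rw [← IsFractionRing.lift_fieldRange (K := K) hg] at hz
  obtain ⟨ξ, rfl⟩ := hz
  have hcomp : (IsFractionRing.lift hg : K →+* L).comp (algebraMap R K) = g := by ext; simp
  have hlift : f.eval₂ g (IsFractionRing.lift hg ξ) =
      IsFractionRing.lift hg (f.eval₂ (algebraMap R K) ξ) := by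
    rw [hom_eval₂, hcomp]
  rw [hlift, _root_.map_ne_zero, ← eval_map]
  exact ((hm.irreducible_iff_irreducible_map_fraction_map).mp hirr).not_isRoot_of_natDegree_ne_one
    (by rwa [hm.natDegree_map])

end Polynomial

instance fact_prime_five : Fact (Nat.Prime 5) := ⟨by norm_num⟩

noncomputable def gaussianIntToZModFive : GaussianInt →+* ZMod 5 :=
  Zsqrtd.lift ⟨3, by decide⟩

noncomputable def cuboidQuartic : GaussianInt[X] :=
  X ^ 4 + C 8 * X ^ 2 - C (12 * Zsqrtd.sqrtd) * X - C 4

lemma cuboidQuartic_monic : cuboidQuartic.Monic := by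
  unfold cuboidQuartic; monicity!

lemma cuboidQuartic_natDegree : cuboidQuartic.natDegree = 4 := by
  unfold cuboidQuartic; compute_degree!

lemma map_cuboidQuartic :
    cuboidQuartic.map gaussianIntToZModFive = X ^ 4 + C 3 * X ^ 2 - X - C 4 := by
  have h8 : gaussianIntToZModFive 8 = 3 := by decide
  have h12 : gaussianIntToZModFive (12 * Zsqrtd.sqrtd) = 1 := by decide
  have h4 : gaussianIntToZModFive 4 = 4 := by decide
  simp only [cuboidQuartic, Polynomial.map_sub, Polynomial.map_add, Polynomial.map_mul,
    Polynomial.map_pow, Polynomial.map_X, map_C, h8, h12, h4, C_1, one_mul]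

lemma irreducible_quartic_zmod_five :
    Irreducible (X ^ 4 + C 3 * X ^ 2 - X - C 4 : (ZMod 5)[X]) := by
  refine Monic.irreducible_of_natDegree_eq_four (by monicity!) (by compute_degree!) ?_ ?_
  · simp only [IsRoot, eval_sub, eval_add, eval_mul, eval_pow, eval_C, eval_X]
    decide
  · intro a b c d h
    have hx : ∀ x : ZMod 5,
        x ^ 4 + 3 * x ^ 2 - x - 4 = (x ^ 2 + a * x + b) * (x ^ 2 + c * x + d) :=
      fun x => by simpa using congrArg (eval x) h
    clear h
    revert a b c d
    decide

lemma cuboidQuartic_irreducible : Irreducible cuboidQuartic := by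
  refine cuboidQuartic_monic.irreducible_of_irreducible_map gaussianIntToZModFive _ ?_
  rw [map_cuboidQuartic]
  exact irreducible_quartic_zmod_five

open Polynomial in
/-- The polynomial `X⁴ + 8X² − 12iX − 4` over the Gaussian integers `ℤ[i]` is
irreducible; in particular the quartic `u⁴ + 8u² − 12iu − 4 = 0` has no root of the
form `a + b·i` with `a`, `b` rational. -/
theorem stmt_19 :
    Irreducible (X ^ 4 + C 8 * X ^ 2 - C (12 * Zsqrtd.sqrtd) * X - C 4 :
      Polynomial GaussianInt) ∧
    (∀ a b : ℚ, ((a : ℂ) + (b : ℂ) * Complex.I) ^ 4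
        + 8 * ((a : ℂ) + (b : ℂ) * Complex.I) ^ 2
        - 12 * Complex.I * ((a : ℂ) + (b : ℂ) * Complex.I) - 4 ≠ 0) := by
  refine ⟨cuboidQuartic_irreducible, fun a b => ?_⟩
  have hI : GaussianInt.toComplex Zsqrtd.sqrtd = Complex.I := by
    simp [GaussianInt.toComplex_def]
  have hz : (a + b * Complex.I : ℂ) ∈ Subfield.closure GaussianInt.toComplex.range :=
    add_mem (SubfieldClass.ratCast_mem _ a)
      (mul_mem (SubfieldClass.ratCast_mem _ b) (Subfield.subset_closure ⟨_, hI⟩))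
  have hroot := cuboidQuartic_monic.eval₂_ne_zero_of_mem_closure_range cuboidQuartic_irreducible
    (by rw [cuboidQuartic_natDegree]; decide) GaussianInt.toComplex_injective hz
  simpa [cuboidQuartic, hI, map_ofNat] using hroot
end
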